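/- arXiv:1202.4505 — 3 statements merged into one kernel-verified Lean document; each statement's English description precedes it below -/
import Mathlib

section
/- Let S = {(i,j) ∈ Fin 16 × Fin 16 : i ≠ j} \ {(0,15),(15,0)}, and let ~ be the equivalence relation on S generated by (i,j) ~ (15-j, 15-i) together with (i, 15-i) ~ (15-i, i) for all i. Then the quotient S/~ has exactly 119 equivalence classes. -/
set_option maxRecDepth 100000


/-- The set S of nontrivial pairs. -/
def Spairs : Set (Fin 16 × Fin 16) :=
  {p | p.1 ≠ p.2} \ {((0 : Fin 16), (15 : Fin 16)), ((15 : Fin 16), (0 : Fin 16))}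

/-- σ(i,j) = (15-j, 15-i). -/
def sigmaMap (p : Fin 16 × Fin 16) : Fin 16 × Fin 16 :=
  (⟨15 - (p.2 : ℕ), by omega⟩, ⟨15 - (p.1 : ℕ), by omega⟩)

/-- The base relation on S: (i,j) ~ (15-j,15-i), and (i,15-i) ~ (15-i,i). -/
def baseRel (x y : Spairs) : Prop :=
  (y : Fin 16 × Fin 16) = sigmaMap x ∨
    (∃ i : Fin 16, (x : Fin 16 × Fin 16) = (i, ⟨15 - (i : ℕ), by omega⟩) ∧
      (y : Fin 16 × Fin 16) = (⟨15 - (i : ℕ), by omega⟩, i))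

lemma mem_Spairs_iff (p : Fin 16 × Fin 16) :
    p ∈ Spairs ↔ p.1 ≠ p.2 ∧ p ≠ ((0 : Fin 16), (15 : Fin 16)) ∧
      p ≠ ((15 : Fin 16), (0 : Fin 16)) := by
  simp [Spairs, and_assoc]

instance : DecidablePred (· ∈ Spairs) := fun p =>
  decidable_of_iff _ (mem_Spairs_iff p).symm

/-- canonical representative -/
def canon (p : Fin 16 × Fin 16) : Fin 16 × Fin 16 :=
  if (p.1 : ℕ) + (p.2 : ℕ) = 15 then (if (p.1 : ℕ) ≤ (p.2 : ℕ) then p else (p.2, p.1))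
  else if ((p.1 : ℕ) < ((sigmaMap p).1 : ℕ) ∨
      ((p.1 : ℕ) = ((sigmaMap p).1 : ℕ) ∧ (p.2 : ℕ) ≤ ((sigmaMap p).2 : ℕ))) then p
    else sigmaMap p

lemma canon_sigma : ∀ p : Fin 16 × Fin 16, canon (sigmaMap p) = canon p := by decide

lemma canon_swap : ∀ p : Fin 16 × Fin 16, (p.1 : ℕ) + (p.2 : ℕ) = 15 →
    canon (p.2, p.1) = canon p := by decide

lemma canon_idem : ∀ p : Fin 16 × Fin 16, canon (canon p) = canon p := by decide

lemma canon_mem : ∀ p : Fin 16 × Fin 16, p ∈ Spairs → canon p ∈ Spairs := by decide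

/-- canon as a map on Spairs -/
def canonS (x : Spairs) : Spairs := ⟨canon x, canon_mem x x.2⟩

lemma baseRel_canon {x y : Spairs} (h : baseRel x y) : canonS x = canonS y := by
  apply Subtype.ext
  show canon (x : Fin 16 × Fin 16) = canon (y : Fin 16 × Fin 16)
  rcases h with h | ⟨i, hx, hy⟩
  · rw [h, canon_sigma]
  · rw [hx, hy]
    have := canon_swap (i, (⟨15 - (i : ℕ), by omega⟩ : Fin 16)) (by simp; omega)
    simpa using this.symm

lemma eqvGen_canon {x y : Spairs} (h : Relation.EqvGen baseRel x y) :
    canonS x = canonS y := by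
  induction h with
  | rel _ _ h => exact baseRel_canon h
  | refl => rfl
  | symm _ _ _ ih => exact ih.symm
  | trans _ _ _ _ _ ih1 ih2 => exact ih1.trans ih2

lemma rel_canon (x : Spairs) : Relation.EqvGen baseRel x (canonS x) := by
  rcases x with ⟨p, hp⟩
  by_cases h15 : (p.1 : ℕ) + (p.2 : ℕ) = 15
  · by_cases hle : (p.1 : ℕ) ≤ (p.2 : ℕ)
    · have : canonS ⟨p, hp⟩ = ⟨p, hp⟩ := by
        apply Subtype.ext; show canon p = p
        unfold canon; rw [if_pos h15, if_pos hle]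
      rw [this]; exact Relation.EqvGen.refl _
    · apply Relation.EqvGen.rel
      right
      refine ⟨p.1, ?_, ?_⟩
      · show p = _
        have : p.2 = (⟨15 - (p.1 : ℕ), by omega⟩ : Fin 16) := by
          apply Fin.ext; simp; omega
        rw [← this]
      · show canon p = _
        simp only [canon, if_pos h15, if_neg hle]
        have : p.2 = (⟨15 - (p.1 : ℕ), by omega⟩ : Fin 16) := by
          apply Fin.ext; simp; omega
        rw [← this]
  · by_cases hle : ((p.1 : ℕ) < ((sigmaMap p).1 : ℕ) ∨
        ((p.1 : ℕ) = ((sigmaMap p).1 : ℕ) ∧ (p.2 : ℕ) ≤ ((sigmaMap p).2 : ℕ)))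
    · have : canonS ⟨p, hp⟩ = ⟨p, hp⟩ := by
        apply Subtype.ext; show canon p = p
        unfold canon; rw [if_neg h15, if_pos hle]
      rw [this]; exact Relation.EqvGen.refl _
    · apply Relation.EqvGen.rel
      left
      show canon p = sigmaMap p
      unfold canon; rw [if_neg h15, if_neg hle]

/-- fixed points of canon in Spairs -/
def FixC := {p : Fin 16 × Fin 16 // p ∈ Spairs ∧ canon p = p}

instance : Fintype FixC := by unfold FixC; infer_instance

def quotEquivFix : Quotient (Relation.EqvGen.setoid baseRel) ≃ FixC where
  toFun := Quotient.lift (fun x : Spairs => (⟨canon x, canon_mem x x.2, canon_idem x⟩ : FixC))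
    (fun x y h => by
      have : canonS x = canonS y := eqvGen_canon h
      have := congrArg Subtype.val this
      exact Subtype.ext this)
  invFun := fun y => Quotient.mk _ (⟨y.1, y.2.1⟩ : Spairs)
  left_inv := by
    intro q
    induction q using Quotient.inductionOn with
    | h x =>
      apply Quotient.sound
      show Relation.EqvGen baseRel _ _
      exact Relation.EqvGen.symm _ _ (rel_canon x)
  right_inv := by
    intro y
    apply Subtype.ext
    show canon y.1 = y.1
    exact y.2.2

/-- The quotient of S by the equivalence generated by the exchange relation
and the relation (i,15-i) ~ (15-i,i) has exactly 119 classes. -/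
theorem card_quotient_eq_119 :
    Nat.card (Quotient (Relation.EqvGen.setoid baseRel)) = 119 := by
  rw [Nat.card_congr quotEquivFix]
  have : Nat.card FixC = Fintype.card FixC := Nat.card_eq_fintype_card
  rw [this]
  show Fintype.card {p : Fin 16 × Fin 16 // p ∈ Spairs ∧ canon p = p} = 119
  decide
end

section
/- Let M be a monoid equipped with a map r : M → M satisfying r(x*y) = r(y)*r(x) for all x,y and r(r(x)) = x. Suppose a,b,...,p ∈ M satisfy: a = c, c = g, g = m; f = j, j = l, l = p; f = r(a); e = i, i = k, k = o; b = d, d = h, h = n; b = r(e). Define a' = p*a, b' = b*k, c' = l*m, d' = n*o, e' = d*e, f' = f*g, g' = l*m, h' = n*o, i' = h*i, j' = j*c, k' = d*e, l' = f*g, m' = l*m, n' = n*o, o' = d*e, p' = f*g. Then a' = c', c' = g', g' = m'; f' = j', j' = l', l' = p'; f' = r(a'); e' = i', i' = k', k' = o'; b' = d', d' = h', h' = n'; and b' = r(e'). -/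
/-- The edge pattern of the (5,10) tiling propagates from (α,β) to (α',β'). -/
theorem spread_step_5_10 {M : Type*} [Monoid M] (r : M → M)
    (hr : ∀ x y : M, r (x * y) = r y * r x) (hrr : ∀ x : M, r (r x) = x)
    (a b c d e f g h i j k l m n o p : M)
    (hac : a = c) (hcg : c = g) (hgm : g = m)
    (hfj : f = j) (hjl : j = l) (hlp : l = p) (hfa : f = r a)
    (hei : e = i) (hik : i = k) (hko : k = o)
    (hbd : b = d) (hdh : d = h) (hhn : h = n) (hbe : b = r e)
    (a' b' c' d' e' f' g' h' i' j' k' l' m' n' o' p' : M)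
    (ha' : a' = p * a) (hb' : b' = b * k) (hc' : c' = l * m) (hd' : d' = n * o)
    (he' : e' = d * e) (hf' : f' = f * g) (hg' : g' = l * m) (hh' : h' = n * o)
    (hi' : i' = h * i) (hj' : j' = j * c) (hk' : k' = d * e) (hl' : l' = f * g)
    (hm' : m' = l * m) (hn' : n' = n * o) (ho' : o' = d * e) (hp' : p' = f * g) :
    a' = c' ∧ c' = g' ∧ g' = m' ∧
    f' = j' ∧ j' = l' ∧ l' = p' ∧ f' = r a' ∧
    e' = i' ∧ i' = k' ∧ k' = o' ∧
    b' = d' ∧ d' = h' ∧ h' = n' ∧ b' = r e' := by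
  subst ha' hb' hc' hd' he' hf' hg' hh' hi' hj' hk' hl' hm' hn' ho' hp'
  refine ⟨?_,?_,?_,?_,?_,?_,?_,?_,?_,?_,?_,?_,?_,?_⟩ <;>
    simp only [hr, hrr, ← hac, ← hcg, ← hgm, ← hfj, ← hjl, ← hlp, hfa,
      ← hei, ← hik, ← hko, ← hbd, ← hdh, ← hhn, hbe]
end

section
/- Let M be a monoid with a map r : M → M satisfying r(x*y) = r(y)*r(x) and r(r(x)) = x. Given sixteen sequences a,b,...,p : ℕ → M satisfying for all s ≥ 1 the recurrences a(s) = p(s-1)*a(s-1), b(s) = b(s-1)*k(s-1), c(s) = l(s-1)*m(s-1), d(s) = n(s-1)*o(s-1), e(s) = d(s-1)*e(s-1), f(s) = f(s-1)*g(s-1), g(s) = l(s-1)*m(s-1), h(s) = n(s-1)*o(s-1), i(s) = h(s-1)*i(s-1), j(s) = j(s-1)*c(s-1), k(s) = d(s-1)*e(s-1), l(s) = f(s-1)*g(s-1), m(s) = l(s-1)*m(s-1), n(s) = n(s-1)*o(s-1), o(s) = d(s-1)*e(s-1), p(s) = f(s-1)*g(s-1): if at s = 0 one has a = c = g = m, f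 = j = l = p, f = r(a), e = i = k = o, b = d = h = n, and b = r(e) (evaluating all at 0), then the same six families of relations hold at every s ∈ ℕ. -/
/-- The edge-matching pattern of the (5,10) tiling propagates to all s-spreads. -/
theorem spread_all_5_10 {M : Type*} [Monoid M] (r : M → M)
    (hr : ∀ x y : M, r (x * y) = r y * r x) (hrr : ∀ x : M, r (r x) = x)
    (a b c d e f g h i j k l m n o p : ℕ → M)
    (ha : ∀ s, a (s + 1) = p s * a s) (hb : ∀ s, b (s + 1) = b s * k s)
    (hc : ∀ s, c (s + 1) = l s * m s) (hd : ∀ s, d (s + 1) = n s * o s)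
    (he : ∀ s, e (s + 1) = d s * e s) (hf : ∀ s, f (s + 1) = f s * g s)
    (hg : ∀ s, g (s + 1) = l s * m s) (hh : ∀ s, h (s + 1) = n s * o s)
    (hi : ∀ s, i (s + 1) = h s * i s) (hj : ∀ s, j (s + 1) = j s * c s)
    (hk : ∀ s, k (s + 1) = d s * e s) (hl : ∀ s, l (s + 1) = f s * g s)
    (hm : ∀ s, m (s + 1) = l s * m s) (hn : ∀ s, n (s + 1) = n s * o s)
    (ho : ∀ s, o (s + 1) = d s * e s) (hp : ∀ s, p (s + 1) = f s * g s)
    (h0 : a 0 = c 0 ∧ c 0 = g 0 ∧ g 0 = m 0 ∧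
      f 0 = j 0 ∧ j 0 = l 0 ∧ l 0 = p 0 ∧ f 0 = r (a 0) ∧
      e 0 = i 0 ∧ i 0 = k 0 ∧ k 0 = o 0 ∧
      b 0 = d 0 ∧ d 0 = h 0 ∧ h 0 = n 0 ∧ b 0 = r (e 0)) :
    ∀ s : ℕ, a s = c s ∧ c s = g s ∧ g s = m s ∧
      f s = j s ∧ j s = l s ∧ l s = p s ∧ f s = r (a s) ∧
      e s = i s ∧ i s = k s ∧ k s = o s ∧
      b s = d s ∧ d s = h s ∧ h s = n s ∧ b s = r (e s) := by
  intro s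
  induction s with
  | zero => exact h0
  | succ s ih =>
    obtain ⟨h1, h2, h3, h4, h5, h6, h7, h8, h9, h10, h11, h12, h13, h14⟩ := ih
    have hga : g s = a s := (h1.trans h2).symm
    have hke : k s = e s := (h8.trans h9).symm
    refine ⟨?_, ?_, ?_, ?_, ?_, ?_, ?_, ?_, ?_, ?_, ?_, ?_, ?_, ?_⟩
    · rw [ha, hc, ← h6, h1, h2, h3]
    · rw [hc, hg]
    · rw [hg, hm]
    · rw [hf, hj, h4, hga, h1]
    · rw [hj, hl, h4, hga, h1]
    · rw [hl, hp]
    · have hfp : f s = p s := h4.trans (h5.trans h6)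
      rw [hf, ha, hr, ← h7, ← hfp, h7, hrr, hga]
    · rw [he, hi, h12, h8]
    · rw [hi, hk, ← h12, h8]
    · rw [hk, ho]
    · rw [hb, hd, h11, h12, h13, h10]
    · rw [hd, hh]
    · rw [hh, hn]
    · rw [hb, he, hr, ← h14, ← h11, h14, hrr, ← hke]
end
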